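/- In the family of plane curve germs x(z^{a+b} + x^a y^b)|_{x=1}, i.e. the germs z^{a+b} + y^b − t y^p z^q = 0 at points of the chart x = 1 along the pole axis, the singularity is of uniform Brieskorn type (b, a+b) for all t; in particular the Milnor number (b−1)(a+b−1) is constant in t and there is no jump (λ = 0 at [1:0:0]). -/

import Mathlib

open MvPolynomial

/-- The Milnor number of an isolated plane curve singularity germ `g` at the origin:
the dimension over `ℂ` of the quotient of the formal power series ring `ℂ[[x,z]]`
(playing the role of the local ring `ℂ{x,z}`) by the Jacobian ideal `(∂g/∂x, ∂g/∂z)`. -/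
noncomputable def milnor (g : MvPolynomial (Fin 2) ℂ) : ℕ :=
  Module.finrank ℂ
    ((MvPowerSeries (Fin 2) ℂ) ⧸
      Ideal.span {(↑(pderiv 0 g) : MvPowerSeries (Fin 2) ℂ),
                  (↑(pderiv 1 g) : MvPowerSeries (Fin 2) ℂ)})

/-!
Up to the units `b` and `a + b`, the Jacobian ideal of `z^(a+b) + y^b - t y^p z^q` is generated by
`f₁ = y^m - τ₁ y^(p-1) z^q` and `f₂ = z^k - τ₂ y^p z^(q-1)` with `m = b - 1`, `k = a + b - 1`.
Because `p + q = a + b + 1`, each correction term has total degree larger than the leading power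
`y^m`, resp. `z^k`, so the ideal behaves like `(y^m, z^k)`:

* dividing by `f₁, f₂` degree by degree (a recursion on total degree, which converges formally)
  leaves a remainder supported on the box `{y^i z^j : i < m, j < k}`;
* if a box-supported series is `u f₁ + v f₂`, its lowest-degree part `y^m U + z^k V` vanishes,
  so `(U, V)` is a multiple of the Koszul syzygy `(z^k, -y^m)`; subtracting the corresponding
  multiple of `(f₂, -f₁)` raises the orders of `u` and `v`, and iterating shows the series is `0`.

Hence the box monomials form a basis of the Milnor algebra, of dimension `m k` for every `t`.
-/

theorem Ideal.span_pair_mul_left_unit {R : Type*} [CommSemiring R] {a b : R} (ha : IsUnit a)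
    (hb : IsUnit b) (x y : R) : Ideal.span {a * x, b * y} = Ideal.span {x, y} := by
  rw [Ideal.span_insert, Ideal.span_insert, Ideal.span_singleton_mul_left_unit ha,
    Ideal.span_singleton_mul_left_unit hb]

noncomputable section

namespace MvPowerSeries

variable {R : Type*} [CommRing R]

def biexp (i j : ℕ) : Fin 2 →₀ ℕ := Finsupp.single 0 i + Finsupp.single 1 j

@[simp] lemma biexp_apply_zero (i j : ℕ) : biexp i j 0 = i := by simp [biexp]

@[simp] lemma biexp_apply_one (i j : ℕ) : biexp i j 1 = j := by simp [biexp]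

lemma biexp_eta (e : Fin 2 →₀ ℕ) : biexp (e 0) (e 1) = e := by
  ext s
  fin_cases s <;> simp

lemma biexp_le_biexp_iff {s r i j : ℕ} : biexp s r ≤ biexp i j ↔ s ≤ i ∧ r ≤ j := by
  simp [Finsupp.le_def, Fin.forall_fin_two]

lemma biexp_tsub_biexp (i j s r : ℕ) : biexp i j - biexp s r = biexp (i - s) (j - r) := by
  ext e
  fin_cases e <;> simp

lemma biexp_inj {i j i' j' : ℕ} : biexp i j = biexp i' j' ↔ i = i' ∧ j = j' := by
  refine ⟨fun h => ⟨by simpa using congr($h 0), by simpa using congr($h 1)⟩, ?_⟩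
  rintro ⟨rfl, rfl⟩
  rfl

@[simp] lemma degree_biexp (i j : ℕ) : (biexp i j).degree = i + j := by
  simp [biexp, Finsupp.degree_single]

lemma ext_biexp {φ ψ : MvPowerSeries (Fin 2) R}
    (h : ∀ i j, coeff (biexp i j) φ = coeff (biexp i j) ψ) : φ = ψ :=
  ext fun e => by simpa only [biexp_eta] using h (e 0) (e 1)

lemma nat_le_order_iff_coeff_biexp {φ : MvPowerSeries (Fin 2) R} {n : ℕ} :
    (n : ℕ∞) ≤ φ.order ↔ ∀ i j, i + j < n → coeff (biexp i j) φ = 0 := by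
  refine ⟨fun h i j hij => coeff_of_lt_order ?_, fun h => nat_le_order fun e he => ?_⟩
  · rw [degree_biexp]
    exact lt_of_lt_of_le (by exact_mod_cast hij) h
  · rw [← biexp_eta e] at he ⊢
    exact h _ _ (by simpa using he)

lemma X_pow_mul_X_pow_eq_monomial (s r : ℕ) :
    (X 0 ^ s * X 1 ^ r : MvPowerSeries (Fin 2) R) = monomial (biexp s r) 1 := by
  rw [X_pow_eq, X_pow_eq, monomial_mul_monomial, one_mul, biexp]

lemma coeff_biexp_mul_X_pow_mul_X_pow (φ : MvPowerSeries (Fin 2) R) (i j s r : ℕ) :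
    coeff (biexp i j) (φ * (X 0 ^ s * X 1 ^ r)) =
      if s ≤ i ∧ r ≤ j then coeff (biexp (i - s) (j - r)) φ else 0 := by
  simp [X_pow_mul_X_pow_eq_monomial, coeff_mul_monomial, biexp_le_biexp_iff, biexp_tsub_biexp]

def ofCoeffs (w : ℕ → ℕ → R) : MvPowerSeries (Fin 2) R := fun e => w (e 0) (e 1)

@[simp] lemma coeff_biexp_ofCoeffs (w : ℕ → ℕ → R) (i j : ℕ) :
    coeff (biexp i j) (ofCoeffs w) = w i j := by
  simp [ofCoeffs, coeff_apply]

def monicBinomial (s r : ℕ) (τ : R) (s' r' : ℕ) : MvPowerSeries (Fin 2) R :=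
  X 0 ^ s * X 1 ^ r - C τ * (X 0 ^ s' * X 1 ^ r')

lemma coeff_biexp_mul_monicBinomial (φ : MvPowerSeries (Fin 2) R) (s r : ℕ) (τ : R)
    (s' r' i j : ℕ) :
    coeff (biexp i j) (φ * monicBinomial s r τ s' r') =
      (if s ≤ i ∧ r ≤ j then coeff (biexp (i - s) (j - r)) φ else 0) -
        τ * if s' ≤ i ∧ r' ≤ j then coeff (biexp (i - s') (j - r')) φ else 0 := by
  rw [monicBinomial, mul_sub, mul_left_comm φ (C τ), map_sub, coeff_C_mul,
    coeff_biexp_mul_X_pow_mul_X_pow, coeff_biexp_mul_X_pow_mul_X_pow]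

lemma coeff_biexp_mul_monicBinomial_of_le_order {φ : MvPowerSeries (Fin 2) R}
    {n s r s' r' i j : ℕ} (τ : R) (hφ : (n : ℕ∞) ≤ φ.order) (hij : i + j < n + s' + r') :
    coeff (biexp i j) (φ * monicBinomial s r τ s' r') =
      if s ≤ i ∧ r ≤ j then coeff (biexp (i - s) (j - r)) φ else 0 := by
  have hlow : (if s' ≤ i ∧ r' ≤ j then coeff (biexp (i - s') (j - r')) φ else 0) = 0 :=
    ite_eq_right_iff.mpr fun h => nat_le_order_iff_coeff_biexp.mp hφ _ _ (by omega)
  rw [coeff_biexp_mul_monicBinomial, hlow, mul_zero, sub_zero]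

section Box

variable {m k : ℕ}

def SupportedInBox (m k : ℕ) (S : MvPowerSeries (Fin 2) R) : Prop :=
  ∀ i j, m ≤ i ∨ k ≤ j → coeff (biexp i j) S = 0

def boxSum (g : Fin m × Fin k → R) : MvPowerSeries (Fin 2) R :=
  ∑ ij, g ij • monomial (biexp ij.1 ij.2) 1

lemma coeff_biexp_boxSum (g : Fin m × Fin k → R) (i j : ℕ) :
    coeff (biexp i j) (boxSum g) =
      if h : i < m ∧ j < k then g (⟨i, h.1⟩, ⟨j, h.2⟩) else 0 := by
  simp only [boxSum, map_sum, map_smul, coeff_monomial, biexp_inj, smul_eq_mul, mul_ite, mul_one,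
    mul_zero]
  split_ifs with h
  · rw [Fintype.sum_eq_single (⟨i, h.1⟩, ⟨j, h.2⟩)]
    · simp
    · rintro ⟨i', j'⟩ hne
      rw [if_neg]
      rintro ⟨rfl, rfl⟩
      exact hne rfl
  · refine Finset.sum_eq_zero fun ij _ => if_neg ?_
    rintro ⟨rfl, rfl⟩
    exact h ⟨ij.1.2, ij.2.2⟩

lemma supportedInBox_boxSum (g : Fin m × Fin k → R) : SupportedInBox m k (boxSum g) :=
  fun i j h => by rw [coeff_biexp_boxSum, dif_neg (by omega)]

lemma SupportedInBox.eq_boxSum {S : MvPowerSeries (Fin 2) R} (hS : SupportedInBox m k S) :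
    S = boxSum fun ij : Fin m × Fin k => coeff (biexp ij.1 ij.2) S := by
  refine ext_biexp fun i j => ?_
  rw [coeff_biexp_boxSum]
  split_ifs with h
  · rfl
  · exact hS i j (by omega)

end Box

section Division

variable {τ₁ τ₂ : R} {m k γ₀ γ₁ δ₀ δ₁ : ℕ}

lemma coeff_biexp_mul_add_mul_of_le_order (hγ : m < γ₀ + γ₁) (hδ : k < δ₀ + δ₁)
    {u v : MvPowerSeries (Fin 2) R} {N i j : ℕ} (hu : ((N - m : ℕ) : ℕ∞) ≤ u.order)
    (hv : ((N - k : ℕ) : ℕ∞) ≤ v.order) (hij : i + j ≤ N) :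
    coeff (biexp i j) (u * monicBinomial m 0 τ₁ γ₀ γ₁ + v * monicBinomial 0 k τ₂ δ₀ δ₁) =
      (if m ≤ i then coeff (biexp (i - m) j) u else 0) +
        if k ≤ j then coeff (biexp i (j - k)) v else 0 := by
  rw [map_add, coeff_biexp_mul_monicBinomial_of_le_order τ₁ hu (by omega),
    coeff_biexp_mul_monicBinomial_of_le_order τ₂ hv (by omega)]
  simp

/-- The lowest-degree part `y^m U + z^k V` of a box-supported `u f₁ + v f₂` vanishes, so
`U = z^k Φ` and `V = -y^m Φ`; subtracting `Φ • (f₂, -f₁)` raises both orders. -/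
lemma exists_mul_add_mul_eq_of_le_order (hγ : m < γ₀ + γ₁) (hδ : k < δ₀ + δ₁)
    {S u v : MvPowerSeries (Fin 2) R} (hS : SupportedInBox m k S)
    (huv : u * monicBinomial m 0 τ₁ γ₀ γ₁ + v * monicBinomial 0 k τ₂ δ₀ δ₁ = S) {N : ℕ}
    (hu : ((N - m : ℕ) : ℕ∞) ≤ u.order) (hv : ((N - k : ℕ) : ℕ∞) ≤ v.order) :
    ∃ u' v' : MvPowerSeries (Fin 2) R,
      u' * monicBinomial m 0 τ₁ γ₀ γ₁ + v' * monicBinomial 0 k τ₂ δ₀ δ₁ = S ∧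
        ((N + 1 - m : ℕ) : ℕ∞) ≤ u'.order ∧ ((N + 1 - k : ℕ) : ℕ∞) ≤ v'.order := by
  have lead : ∀ i j, i + j = N → m ≤ i ∨ k ≤ j →
      ((if m ≤ i then coeff (biexp (i - m) j) u else 0) +
        if k ≤ j then coeff (biexp i (j - k)) v else 0) = 0 := fun i j hij hout => by
    rw [← coeff_biexp_mul_add_mul_of_le_order hγ hδ hu hv hij.le, huv, hS i j hout]
  rw [nat_le_order_iff_coeff_biexp] at hu hv
  set Φ : MvPowerSeries (Fin 2) R :=
    ofCoeffs fun i j => if i + j + m + k = N then coeff (biexp i (j + k)) u else 0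
  have hΦ : ((N - (m + k) : ℕ) : ℕ∞) ≤ Φ.order := by
    rw [nat_le_order_iff_coeff_biexp]
    intro i j hij
    simp only [Φ, coeff_biexp_ofCoeffs, ite_eq_right_iff]
    omega
  refine ⟨u - Φ * monicBinomial 0 k τ₂ δ₀ δ₁, v + Φ * monicBinomial m 0 τ₁ γ₀ γ₁,
    by rw [← huv]; ring, ?_, ?_⟩ <;> rw [nat_le_order_iff_coeff_biexp] <;> intro i j hij
  · rw [map_sub, coeff_biexp_mul_monicBinomial_of_le_order τ₂ hΦ (by omega)]
    simp only [Φ, coeff_biexp_ofCoeffs]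
    by_cases hkj : k ≤ j
    · rw [if_pos ⟨Nat.zero_le _, hkj⟩, Nat.sub_add_cancel hkj]
      split_ifs with hN
      · exact sub_self _
      · rw [hu i j (by omega), sub_zero]
    · rw [if_neg (by omega), sub_zero]
      obtain hlt | hN : i + j + m < N ∨ i + j + m = N := by omega
      · exact hu i j (by omega)
      · simpa [hkj] using lead (i + m) j (by omega) (.inl (by omega))
  · rw [map_add, coeff_biexp_mul_monicBinomial_of_le_order τ₁ hΦ (by omega)]
    simp only [Φ, coeff_biexp_ofCoeffs]
    by_cases hmi : m ≤ i
    · rw [if_pos ⟨hmi, Nat.zero_le _⟩]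
      split_ifs with hN
      · simpa [hmi, add_comm] using lead i (j + k) (by omega) (.inr (by omega))
      · rw [hv i j (by omega), add_zero]
    · rw [if_neg (by omega), add_zero]
      obtain hlt | hN : i + j + k < N ∨ i + j + k = N := by omega
      · exact hv i j (by omega)
      · simpa [hmi] using lead i (j + k) (by omega) (.inr (by omega))

theorem SupportedInBox.eq_zero_of_mem_span (hγ : m < γ₀ + γ₁) (hδ : k < δ₀ + δ₁)
    {S : MvPowerSeries (Fin 2) R} (hS : SupportedInBox m k S)
    (hmem : S ∈ Ideal.span {monicBinomial m 0 τ₁ γ₀ γ₁, monicBinomial 0 k τ₂ δ₀ δ₁}) :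
    S = 0 := by
  have key : ∀ N, ∃ u v : MvPowerSeries (Fin 2) R,
      u * monicBinomial m 0 τ₁ γ₀ γ₁ + v * monicBinomial 0 k τ₂ δ₀ δ₁ = S ∧
        ((N - m : ℕ) : ℕ∞) ≤ u.order ∧ ((N - k : ℕ) : ℕ∞) ≤ v.order := by
    intro N
    induction N with
    | zero =>
      obtain ⟨u, v, huv⟩ := Ideal.mem_span_pair.mp hmem
      exact ⟨u, v, huv, by simp, by simp⟩
    | succ N ih =>
      obtain ⟨u, v, huv, hu, hv⟩ := ih
      exact exists_mul_add_mul_eq_of_le_order hγ hδ hS huv hu hv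
  refine ext_biexp fun i j => ?_
  obtain ⟨u, v, huv, hu, hv⟩ := key (i + j + m + k + 1)
  rw [← huv, coeff_biexp_mul_add_mul_of_le_order hγ hδ hu hv (by omega)]
  rw [nat_le_order_iff_coeff_biexp] at hu hv
  rw [hu (i - m) j (by omega), hv i (j - k) (by omega)]
  simp

/-- The coefficients `r` of `F + τ₁ y^γ₀ z^γ₁ U + τ₂ y^δ₀ z^δ₁ V`, where `F = ofCoeffs f` and
`U = r(· + m, ·)`, `V = [· < m] r(·, · + k)` are the division quotients. This is a recursion on
total degree because `γ₀ + γ₁ > m` and `δ₀ + δ₁ > k`. -/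
def residual (τ₁ τ₂ : R) (hγ : m < γ₀ + γ₁) (hδ : k < δ₀ + δ₁) (f : ℕ → ℕ → R) : ℕ → ℕ → R
  | i, j => f i j +
      τ₁ * (if γ₀ ≤ i ∧ γ₁ ≤ j then residual τ₁ τ₂ hγ hδ f (i - γ₀ + m) (j - γ₁) else 0) +
      τ₂ * (if δ₀ ≤ i ∧ δ₁ ≤ j then
        (if i - δ₀ < m then residual τ₁ τ₂ hγ hδ f (i - δ₀) (j - δ₁ + k) else 0) else 0)
termination_by i j => i + j
decreasing_by all_goals omega

theorem exists_supportedInBox_sub_mul_add_mul (hγ : m < γ₀ + γ₁) (hδ : k < δ₀ + δ₁)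
    (F : MvPowerSeries (Fin 2) R) : ∃ u v : MvPowerSeries (Fin 2) R,
      SupportedInBox m k
        (F - (u * monicBinomial m 0 τ₁ γ₀ γ₁ + v * monicBinomial 0 k τ₂ δ₀ δ₁)) := by
  set r := residual τ₁ τ₂ hγ hδ fun i j => coeff (biexp i j) F
  refine ⟨ofCoeffs fun i j => r (i + m) j, ofCoeffs fun i j => if i < m then r i (j + k) else 0,
    fun i j hout => ?_⟩
  have hr : r i j = coeff (biexp i j) F +
      τ₁ * (if γ₀ ≤ i ∧ γ₁ ≤ j then r (i - γ₀ + m) (j - γ₁) else 0) +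
      τ₂ * (if δ₀ ≤ i ∧ δ₁ ≤ j then
        (if i - δ₀ < m then r (i - δ₀) (j - δ₁ + k) else 0) else 0) := by
    simp only [r]
    rw [residual]
  have hlead : ((if m ≤ i then r (i - m + m) j else 0) +
      if k ≤ j then (if i < m then r i (j - k + k) else 0) else 0) = r i j := by
    by_cases hmi : m ≤ i
    · simp [hmi, Nat.sub_add_cancel hmi]
    · simp [hmi, (by omega : k ≤ j), Nat.sub_add_cancel (by omega : k ≤ j), (by omega : i < m)]
  rw [map_sub, map_add, coeff_biexp_mul_monicBinomial, coeff_biexp_mul_monicBinomial]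
  simp only [coeff_biexp_ofCoeffs, Nat.sub_zero, Nat.zero_le, true_and, and_true]
  linear_combination -hr - hlead

end Division

theorem finrank_quotient_span_monicBinomial [Nontrivial R] {τ₁ τ₂ : R} {m k γ₀ γ₁ δ₀ δ₁ : ℕ}
    (hγ : m < γ₀ + γ₁) (hδ : k < δ₀ + δ₁) :
    Module.finrank R (MvPowerSeries (Fin 2) R ⧸
      Ideal.span {monicBinomial m 0 τ₁ γ₀ γ₁, monicBinomial 0 k τ₂ δ₀ δ₁}) = m * k := by
  set J := Ideal.span {monicBinomial m 0 τ₁ γ₀ γ₁, monicBinomial 0 k τ₂ δ₀ δ₁}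
  let v : Fin m × Fin k → MvPowerSeries (Fin 2) R ⧸ J :=
    fun ij => Ideal.Quotient.mkₐ R J (monomial (biexp ij.1 ij.2) 1)
  have hv : ∀ g, ∑ ij, g ij • v ij = Ideal.Quotient.mkₐ R J (boxSum g) := fun g => by
    simp [v, boxSum, map_sum]
  have hli : LinearIndependent R v := by
    refine Fintype.linearIndependent_iff.mpr fun g hg ij => ?_
    rw [hv, Ideal.Quotient.mkₐ_eq_mk, Ideal.Quotient.eq_zero_iff_mem] at hg
    have h0 := (supportedInBox_boxSum g).eq_zero_of_mem_span hγ hδ hg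
    simpa [coeff_biexp_boxSum] using congr(coeff (biexp ij.1 ij.2) $h0)
  have hsp : ⊤ ≤ Submodule.span R (Set.range v) := by
    rintro x -
    obtain ⟨F, rfl⟩ := Ideal.Quotient.mk_surjective x
    obtain ⟨u, w, hbox⟩ := exists_supportedInBox_sub_mul_add_mul (τ₁ := τ₁) (τ₂ := τ₂) hγ hδ F
    have hF : Ideal.Quotient.mk J F = Ideal.Quotient.mkₐ R J
        (F - (u * monicBinomial m 0 τ₁ γ₀ γ₁ + w * monicBinomial 0 k τ₂ δ₀ δ₁)) := by
      rw [Ideal.Quotient.mkₐ_eq_mk, Ideal.Quotient.eq, sub_sub_cancel]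
      exact Ideal.mem_span_pair.mpr ⟨u, w, rfl⟩
    rw [hF, hbox.eq_boxSum, ← hv]
    exact Submodule.sum_mem _ fun ij _ => Submodule.smul_mem _ _ (Submodule.subset_span ⟨ij, rfl⟩)
  rw [Module.finrank_eq_card_basis (Module.Basis.mk hli hsp), Fintype.card_prod, Fintype.card_fin,
    Fintype.card_fin]

end MvPowerSeries

end

theorem MvPolynomial.coe_X_pow_mul_X_pow_sub_C_mul {R : Type*} [CommRing R] (s r : ℕ) (τ : R)
    (s' r' : ℕ) :
    ((X 0 ^ s * X 1 ^ r - C τ * (X 0 ^ s' * X 1 ^ r') : MvPolynomial (Fin 2) R) :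
      MvPowerSeries (Fin 2) R) = MvPowerSeries.monicBinomial s r τ s' r' := by
  rw [← coeToMvPowerSeries.ringHom_apply]
  simp only [map_sub, map_mul, map_pow, coeToMvPowerSeries.ringHom_apply, coe_X, coe_C]
  rfl

theorem milnor_X_pow_add_X_pow_sub_C_mul (a b p q : ℕ) (hb : 1 ≤ b) (habpq : a + b + 1 = p + q)
    (t : ℂ) :
    milnor (X 1 ^ (a + b) + X 0 ^ b - C t * X 0 ^ p * X 1 ^ q) = (b - 1) * (a + b - 1) := by
  have hb₀ : (b : ℂ) ≠ 0 := by exact_mod_cast (by omega : b ≠ 0)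
  have hab₀ : ((a + b : ℕ) : ℂ) ≠ 0 := by exact_mod_cast (by omega : a + b ≠ 0)
  set g : MvPolynomial (Fin 2) ℂ := X 1 ^ (a + b) + X 0 ^ b - C t * X 0 ^ p * X 1 ^ q
  have h₀ : pderiv 0 g = C (b : ℂ) *
      (X 0 ^ (b - 1) * X 1 ^ 0 - C (t * p / b) * (X 0 ^ (p - 1) * X 1 ^ q)) := by
    rw [mul_sub, ← mul_assoc (C _) (C _), ← C_mul, mul_div_cancel₀ _ hb₀]
    simp only [g, map_add, map_sub, Derivation.leibniz, Derivation.leibniz_pow, derivation_C,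
      pderiv_X_self, pderiv_X_of_ne (by decide : (1 : Fin 2) ≠ 0), smul_eq_mul, nsmul_eq_mul,
      map_natCast, C_mul]
    ring
  have h₁ : pderiv 1 g = C ((a + b : ℕ) : ℂ) *
      (X 0 ^ 0 * X 1 ^ (a + b - 1) - C (t * q / (a + b : ℕ)) * (X 0 ^ p * X 1 ^ (q - 1))) := by
    rw [mul_sub, ← mul_assoc (C _) (C _), ← C_mul, mul_div_cancel₀ _ hab₀]
    simp only [g, map_add, map_sub, Derivation.leibniz, Derivation.leibniz_pow, derivation_C,
      pderiv_X_self, pderiv_X_of_ne (by decide : (0 : Fin 2) ≠ 1), smul_eq_mul, nsmul_eq_mul,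
      map_natCast, C_mul]
    ring
  rw [milnor, h₀, h₁, coe_mul, coe_mul, coe_C, coe_C, coe_X_pow_mul_X_pow_sub_C_mul,
    coe_X_pow_mul_X_pow_sub_C_mul,
    Ideal.span_pair_mul_left_unit ((isUnit_iff_ne_zero.mpr hb₀).map _)
      ((isUnit_iff_ne_zero.mpr hab₀).map _),
    MvPowerSeries.finrank_quotient_span_monicBinomial (by omega) (by omega)]

theorem stmt_13_general (a b p q : ℕ) (hb : 1 ≤ b)
    (habpq : a + b + 1 = p + q) :
    ∀ t : ℂ,
      milnor ((X 1) ^ (a + b) + (X 0) ^ b - C t * (X 0) ^ p * (X 1) ^ q) =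
        (b - 1) * (a + b - 1) ∧
      milnor ((X 1) ^ (a + b) + (X 0) ^ b - C t * (X 0) ^ p * (X 1) ^ q) =
        milnor ((X 1) ^ (a + b) + (X 0) ^ b) := by
  intro t
  have h₀ := milnor_X_pow_add_X_pow_sub_C_mul a b p q hb habpq 0
  simp only [map_zero, zero_mul, sub_zero] at h₀
  rw [milnor_X_pow_add_X_pow_sub_C_mul a b p q hb habpq t, h₀]
  exact ⟨rfl, rfl⟩

/-- in the chart x = 1 (coordinates (y,z) with `X 0 = y`, `X 1 = z`),
the family of germs `z^{a+b} + y^b − t y^p z^q` has uniform Brieskorn type (b, a+b):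
the Milnor number equals (b−1)(a+b−1) for every t, so it is constant in t and there
is no jump (λ = 0) at the point [1:0:0]. -/
theorem stmt_13 (a b p q : ℕ) (ha : 1 ≤ a) (hb : 1 ≤ b) (hp : 1 ≤ p) (hq : 1 ≤ q)
    (habpq : a + b + 1 = p + q) :
    ∀ t : ℂ,
      milnor ((X 1) ^ (a + b) + (X 0) ^ b - C t * (X 0) ^ p * (X 1) ^ q) =
        (b - 1) * (a + b - 1) ∧
      milnor ((X 1) ^ (a + b) + (X 0) ^ b - C t * (X 0) ^ p * (X 1) ^ q) =
        milnor ((X 1) ^ (a + b) + (X 0) ^ b) :=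
  stmt_13_general a b p q hb habpq
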